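/- arXiv:1609.06342 — 10 statements merged into one kernel-verified Lean document; each statement's English description precedes it below -/
import Mathlib

section
/- Define Q : ℤ → ℤ by Q(n) = 0 for all n ≤ 0, and for all k ≥ 1, Q(3k) = 3k − 2; for all k ≥ 0, Q(3k+1) = 3 and Q(3k+2) = 3k + 2 (so Q(1)=3, Q(2)=2, Q(3)=1). Then Q satisfies the Hofstadter Q-recurrence for every n ≥ 4, i.e., Q(n) = Q(n − Q(n−1)) + Q(n − Q(n−2)) for all n ≥ 4. (This is Golomb's solution to the Q-recurrence with initial condition [3,2,1].) -/
/-!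
On each residue class mod 3 the values `Q (n - 1)` and `Q (n - 2)` are either small constants or
within a constant of `n`, so the two lookbacks `n - Q (n - 1)` and `n - Q (n - 2)` land on one of
the initial indices `1, 2, 3, 4` and on `n - 3`. The recurrence then reduces, in each class, to a
linear identity in `n`.
-/

structure IsGolomb321 (Q : ℤ → ℤ) : Prop where
  three_mul : ∀ k : ℤ, 1 ≤ k → Q (3 * k) = 3 * k - 2
  three_mul_add_one : ∀ k : ℤ, 0 ≤ k → Q (3 * k + 1) = 3
  three_mul_add_two : ∀ k : ℤ, 0 ≤ k → Q (3 * k + 2) = 3 * k + 2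

namespace IsGolomb321

variable {Q : ℤ → ℤ}

theorem apply_of_emod_eq_zero (hQ : IsGolomb321 Q) {n : ℤ} (hn : 3 ≤ n) (h : n % 3 = 0) :
    Q n = n - 2 := by
  obtain ⟨k, rfl⟩ : ∃ k, n = 3 * k := ⟨n / 3, by omega⟩
  exact hQ.three_mul k (by omega)

theorem apply_of_emod_eq_one (hQ : IsGolomb321 Q) {n : ℤ} (hn : 1 ≤ n) (h : n % 3 = 1) :
    Q n = 3 := by
  obtain ⟨k, rfl⟩ : ∃ k, n = 3 * k + 1 := ⟨n / 3, by omega⟩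
  exact hQ.three_mul_add_one k (by omega)

theorem apply_of_emod_eq_two (hQ : IsGolomb321 Q) {n : ℤ} (hn : 2 ≤ n) (h : n % 3 = 2) :
    Q n = n := by
  obtain ⟨k, rfl⟩ : ∃ k, n = 3 * k + 2 := ⟨n / 3, by omega⟩
  exact hQ.three_mul_add_two k (by omega)

theorem recurrence (hQ : IsGolomb321 Q) {n : ℤ} (hn : 4 ≤ n) :
    Q n = Q (n - Q (n - 1)) + Q (n - Q (n - 2)) := by
  rcases (by omega : n % 3 = 0 ∨ n % 3 = 1 ∨ n % 3 = 2) with h | h | h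
  · rw [hQ.apply_of_emod_eq_two (n := n - 1) (by omega) (by omega),
      hQ.apply_of_emod_eq_one (n := n - 2) (by omega) (by omega), sub_sub_cancel,
      hQ.apply_of_emod_eq_zero (by omega) h, hQ.apply_of_emod_eq_one le_rfl rfl,
      hQ.apply_of_emod_eq_zero (n := n - 3) (by omega) (by omega)]
    ring
  · rw [hQ.apply_of_emod_eq_zero (n := n - 1) (by omega) (by omega),
      hQ.apply_of_emod_eq_two (n := n - 2) (by omega) (by omega), sub_sub_cancel,
      show n - (n - 1 - 2) = 3 by ring, hQ.apply_of_emod_eq_one (by omega) h,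
      hQ.apply_of_emod_eq_zero le_rfl rfl, hQ.apply_of_emod_eq_two le_rfl rfl]
    norm_num
  · rw [hQ.apply_of_emod_eq_one (n := n - 1) (by omega) (by omega),
      hQ.apply_of_emod_eq_zero (n := n - 2) (by omega) (by omega),
      show n - (n - 2 - 2) = 4 by ring, hQ.apply_of_emod_eq_two (by omega) h,
      hQ.apply_of_emod_eq_one (n := 4) (by norm_num) rfl,
      hQ.apply_of_emod_eq_two (n := n - 3) (by omega) (by omega)]
    ring

end IsGolomb321

theorem golomb_solution_general (Q : ℤ → ℤ)
    (h3k : ∀ k : ℤ, 1 ≤ k → Q (3 * k) = 3 * k - 2)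
    (h3k1 : ∀ k : ℤ, 0 ≤ k → Q (3 * k + 1) = 3)
    (h3k2 : ∀ k : ℤ, 0 ≤ k → Q (3 * k + 2) = 3 * k + 2) :
    ∀ n : ℤ, 4 ≤ n → Q n = Q (n - Q (n - 1)) + Q (n - Q (n - 2)) :=
  fun _ hn => IsGolomb321.recurrence ⟨h3k, h3k1, h3k2⟩ hn

/-- Golomb's solution [3,2,1] to the Hofstadter Q-recurrence. -/
theorem golomb_solution (Q : ℤ → ℤ)
    (h0 : ∀ n : ℤ, n ≤ 0 → Q n = 0)
    (h3k : ∀ k : ℤ, 1 ≤ k → Q (3 * k) = 3 * k - 2)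
    (h3k1 : ∀ k : ℤ, 0 ≤ k → Q (3 * k + 1) = 3)
    (h3k2 : ∀ k : ℤ, 0 ≤ k → Q (3 * k + 2) = 3 * k + 2) :
    ∀ n : ℤ, 4 ≤ n → Q n = Q (n - Q (n - 1)) + Q (n - Q (n - 2)) :=
  golomb_solution_general Q h3k h3k1 h3k2
end

section
/- Let F denote the Fibonacci numbers with F_1 = F_2 = 1. Define Q : ℤ → ℤ by Q(n) = 0 for all n ≤ 0, and for all k ≥ 1, Q(3k) = F_{k+4}; for all k ≥ 0, Q(3k+1) = 3 and Q(3k+2) = 6 (so the first six values are 3, 6, 5, 3, 6, 8). Then Q satisfies the Hofstadter Q-recurrence for every n ≥ 7, i.e., Q(n) = Q(n − Q(n−1)) + Q(n − Q(n−2)) for all n ≥ 7. (This is Ruskey's solution embedding the Fibonacci numbers in the Q-recurrence, with initial condition [3,6,5,3,6,8].) -/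
/-!
Write `n = 3k + r`. For `r = 0` the offsets `Q(n-1) = 6` and `Q(n-2) = 3` reach back to
`Q(3k-6) + Q(3k-3) = F_{k+2} + F_{k+3} = F_{k+4} = Q(n)`. For `r = 1, 2` one of the offsets is a
Fibonacci number `≥ n`, so `n` minus it lands in the zero region, while the other offset
(`6` resp. `3`) lands on a term equal to `Q(n)`.
-/

lemma three_mul_add_eight_le_fib_add_six (k : ℕ) : 3 * k + 8 ≤ Nat.fib (k + 6) := by
  induction k with
  | zero => decide
  | succ k ih =>
    have h5 : 5 ≤ Nat.fib (k + 5) := (Nat.le_fib_self (by omega)).trans' (by omega)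
    have hrec : Nat.fib (k + 1 + 6) = Nat.fib (k + 5) + Nat.fib (k + 6) := Nat.fib_add_two
    omega

section

variable {Q : ℤ → ℤ} {n : ℤ} {k : ℕ}

lemma ruskey_recurrence_of_eq_three_mul_add_nine
    (hQ0 : ∀ k : ℕ, Q (3 * k + 3) = Nat.fib (k + 5))
    (hQ1 : ∀ k : ℕ, Q (3 * k + 1) = 3) (hQ2 : ∀ k : ℕ, Q (3 * k + 2) = 6)
    (hn : n = 3 * k + 9) :
    Q n = Q (n - Q (n - 1)) + Q (n - Q (n - 2)) := by
  have h1 : Q (n - 1) = 6 := (congrArg Q (by push_cast; omega)).trans (hQ2 (k + 2))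
  have h2 : Q (n - 2) = 3 := (congrArg Q (by push_cast; omega)).trans (hQ1 (k + 2))
  have h6 : Q (n - 6) = Nat.fib (k + 5) := (congrArg Q (by omega)).trans (hQ0 k)
  have h3 : Q (n - 3) = Nat.fib (k + 6) := (congrArg Q (by push_cast; omega)).trans (hQ0 (k + 1))
  have h0 : Q n = Nat.fib (k + 7) := (congrArg Q (by push_cast; omega)).trans (hQ0 (k + 2))
  rw [h1, h2, h6, h3, h0, Nat.fib_add_two, Nat.cast_add]

lemma ruskey_recurrence_of_eq_three_mul_add_seven (hQneg : ∀ n : ℤ, n ≤ 0 → Q n = 0)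
    (hQ0 : ∀ k : ℕ, Q (3 * k + 3) = Nat.fib (k + 5))
    (hQ1 : ∀ k : ℕ, Q (3 * k + 1) = 3) (hQ2 : ∀ k : ℕ, Q (3 * k + 2) = 6)
    (hn : n = 3 * k + 7) :
    Q n = Q (n - Q (n - 1)) + Q (n - Q (n - 2)) := by
  have hfib := three_mul_add_eight_le_fib_add_six k
  have h1 : Q (n - 1) = Nat.fib (k + 6) := (congrArg Q (by push_cast; omega)).trans (hQ0 (k + 1))
  have h2 : Q (n - 2) = 6 := (congrArg Q (by push_cast; omega)).trans (hQ2 (k + 1))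
  have h6 : Q (n - 6) = 3 := (congrArg Q (by omega)).trans (hQ1 k)
  have h0 : Q n = 3 := (congrArg Q (by push_cast; omega)).trans (hQ1 (k + 2))
  rw [h1, h2, h6, h0, hQneg _ (by omega), zero_add]

lemma ruskey_recurrence_of_eq_three_mul_add_eight (hQneg : ∀ n : ℤ, n ≤ 0 → Q n = 0)
    (hQ0 : ∀ k : ℕ, Q (3 * k + 3) = Nat.fib (k + 5))
    (hQ1 : ∀ k : ℕ, Q (3 * k + 1) = 3) (hQ2 : ∀ k : ℕ, Q (3 * k + 2) = 6)
    (hn : n = 3 * k + 8) :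
    Q n = Q (n - Q (n - 1)) + Q (n - Q (n - 2)) := by
  have hfib := three_mul_add_eight_le_fib_add_six k
  have h1 : Q (n - 1) = 3 := (congrArg Q (by push_cast; omega)).trans (hQ1 (k + 2))
  have h2 : Q (n - 2) = Nat.fib (k + 6) := (congrArg Q (by push_cast; omega)).trans (hQ0 (k + 1))
  have h3 : Q (n - 3) = 6 := (congrArg Q (by push_cast; omega)).trans (hQ2 (k + 1))
  have h0 : Q n = 6 := (congrArg Q (by push_cast; omega)).trans (hQ2 (k + 2))
  rw [h1, h2, h3, h0, hQneg _ (by omega), add_zero]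

end

/-- Ruskey's solution [3,6,5,3,6,8] embedding the Fibonacci numbers in the
Hofstadter Q-recurrence.  Here `Nat.fib` satisfies `fib 1 = fib 2 = 1`. -/
theorem ruskey_solution (Q : ℤ → ℤ)
    (h0 : ∀ n : ℤ, n ≤ 0 → Q n = 0)
    (h3k : ∀ k : ℕ, 1 ≤ k → Q (3 * (k : ℤ)) = (Nat.fib (k + 4) : ℤ))
    (h3k1 : ∀ k : ℤ, 0 ≤ k → Q (3 * k + 1) = 3)
    (h3k2 : ∀ k : ℤ, 0 ≤ k → Q (3 * k + 2) = 6) :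
    ∀ n : ℤ, 7 ≤ n → Q n = Q (n - Q (n - 1)) + Q (n - Q (n - 2)) := by
  have hQ0 (k : ℕ) : Q (3 * k + 3) = Nat.fib (k + 5) := by
    simpa [mul_add] using h3k (k + 1) (by omega)
  have hQ1 (k : ℕ) : Q (3 * k + 1) = 3 := h3k1 k k.cast_nonneg
  have hQ2 (k : ℕ) : Q (3 * k + 2) = 6 := h3k2 k k.cast_nonneg
  intro n hn
  obtain ⟨k, hk⟩ : ∃ k : ℕ, n = 3 * k + 9 ∨ n = 3 * k + 7 ∨ n = 3 * k + 8 :=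
    ⟨(n - 7).toNat / 3, by omega⟩
  rcases hk with hk | hk | hk
  · exact ruskey_recurrence_of_eq_three_mul_add_nine hQ0 hQ1 hQ2 hk
  · exact ruskey_recurrence_of_eq_three_mul_add_seven h0 hQ0 hQ1 hQ2 hk
  · exact ruskey_recurrence_of_eq_three_mul_add_eight h0 hQ0 hQ1 hQ2 hk
end

section
/- Let r1 and r4 be integers with r4 ≥ 4. Define R : ℤ → ℤ by R(n) = 0 for all n ≤ 0, R(1) = r1, R(2) = 1, R(3) = 0, and for all k ≥ 1: R(4k) = 2k² + (r4 − 2)k, R(4k+1) = 4k, R(4k+2) = 4, R(4k+3) = 3 (so R(4) = r4, R(5) = 4, R(6) = 4, R(7) = 3). Then R(n) = R(n − R(n−1)) + R(n − R(n−2)) + R(n − R(n−3)) for all n ≥ 8. In particular, this recurrence admits a family of solutions with initial condition [r1, 1, 0, r4, 4, 4, 3] containing a quadratic subsequence, two constant subsequences, and a standard linear subsequence. -/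
/-!
Write `n = 4k + j` with `k ≥ 2`. The three arguments `R (n-1), R (n-2), R (n-3)` are the values
on the three preceding residue classes, so the recurrence at `n` only involves `R` near `n`,
at the small indices `2, 3, 4`, and, when `j ≠ 0`, at `n - R (4k)`. Since `R (4k) = 2k² + (r4 - 2)k ≥ 4k + 3`
once `k ≥ 2` and `r4 ≥ 4`, the last index is nonpositive and contributes `0`; what remains is
linear bookkeeping, except for `n = 4k`, where the recurrence is the difference equation
`R (4k) - R (4(k-1)) = 4(k-1) + R 4` of the quadratic term.
-/

def quadTerm (r4 k : ℤ) : ℤ := 2 * k ^ 2 + (r4 - 2) * k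

theorem add_three_le_quadTerm {r4 k : ℤ} (hr4 : 4 ≤ r4) (hk : 2 ≤ k) :
    4 * k + 3 ≤ quadTerm r4 k := by
  unfold quadTerm
  nlinarith

theorem quadTerm_eq_sub_one_add (r4 k : ℤ) :
    quadTerm r4 k = quadTerm r4 (k - 1) + 4 * (k - 1) + quadTerm r4 1 := by
  unfold quadTerm
  ring

def nestedRec (R : ℤ → ℤ) (n : ℤ) : ℤ :=
  R (n - R (n - 1)) + R (n - R (n - 2)) + R (n - R (n - 3))

structure IsQuadraticFamily (r4 : ℤ) (R : ℤ → ℤ) : Prop where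
  of_nonpos : ∀ n, n ≤ 0 → R n = 0
  two : R 2 = 1
  three : R 3 = 0
  four_mul : ∀ k, 1 ≤ k → R (4 * k) = quadTerm r4 k
  four_mul_add_one : ∀ k, 1 ≤ k → R (4 * k + 1) = 4 * k
  four_mul_add_two : ∀ k, 1 ≤ k → R (4 * k + 2) = 4
  four_mul_add_three : ∀ k, 1 ≤ k → R (4 * k + 3) = 3

namespace IsQuadraticFamily

variable {r4 : ℤ} {R : ℤ → ℤ} {k : ℤ}

theorem four_mul_sub_one (hR : IsQuadraticFamily r4 R) (hk : 2 ≤ k) : R (4 * k - 1) = 3 := by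
  rw [show 4 * k - 1 = 4 * (k - 1) + 3 by ring]
  exact hR.four_mul_add_three _ (by omega)

theorem four_mul_sub_two (hR : IsQuadraticFamily r4 R) (hk : 2 ≤ k) : R (4 * k - 2) = 4 := by
  rw [show 4 * k - 2 = 4 * (k - 1) + 2 by ring]
  exact hR.four_mul_add_two _ (by omega)

theorem four_mul_sub_three (hR : IsQuadraticFamily r4 R) (hk : 2 ≤ k) :
    R (4 * k - 3) = 4 * (k - 1) := by
  rw [show 4 * k - 3 = 4 * (k - 1) + 1 by ring]
  exact hR.four_mul_add_one _ (by omega)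

theorem sub_quadTerm_eq_zero (hR : IsQuadraticFamily r4 R) (hr4 : 4 ≤ r4) (hk : 2 ≤ k) {n : ℤ}
    (hn : n ≤ 4 * k + 3) : R (n - quadTerm r4 k) = 0 :=
  hR.of_nonpos _ (by linarith [add_three_le_quadTerm hr4 hk])

theorem nestedRec_four_mul (hR : IsQuadraticFamily r4 R) (hk : 2 ≤ k) :
    nestedRec R (4 * k) = R (4 * k) := by
  have hprev : R (4 * k - 4) = quadTerm r4 (k - 1) := by
    rw [show 4 * k - 4 = 4 * (k - 1) by ring]
    exact hR.four_mul _ (by omega)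
  rw [nestedRec, hR.four_mul_sub_one hk, hR.four_mul_sub_two hk, hR.four_mul_sub_three hk,
    hprev, show 4 * k - 4 * (k - 1) = 4 * 1 by ring,
    hR.four_mul 1 le_rfl, hR.four_mul k (by omega), quadTerm_eq_sub_one_add r4 k]
  ring

theorem nestedRec_four_mul_add_one (hR : IsQuadraticFamily r4 R) (hr4 : 4 ≤ r4) (hk : 2 ≤ k) :
    nestedRec R (4 * k + 1) = R (4 * k + 1) := by
  rw [nestedRec, show 4 * k + 1 - 1 = 4 * k by ring, show 4 * k + 1 - 2 = 4 * k - 1 by ring,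
    show 4 * k + 1 - 3 = 4 * k - 2 by ring, hR.four_mul k (by omega), hR.four_mul_sub_one hk,
    hR.four_mul_sub_two hk, hR.sub_quadTerm_eq_zero hr4 hk (by omega),
    show 4 * k + 1 - 3 = 4 * k - 2 by ring, show 4 * k + 1 - 4 = 4 * k - 3 by ring,
    hR.four_mul_sub_two hk, hR.four_mul_sub_three hk, hR.four_mul_add_one k (by omega)]
  ring

theorem nestedRec_four_mul_add_two (hR : IsQuadraticFamily r4 R) (hr4 : 4 ≤ r4) (hk : 2 ≤ k) :
    nestedRec R (4 * k + 2) = R (4 * k + 2) := by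
  rw [nestedRec, show 4 * k + 2 - 1 = 4 * k + 1 by ring, show 4 * k + 2 - 2 = 4 * k by ring,
    show 4 * k + 2 - 3 = 4 * k - 1 by ring, hR.four_mul_add_one k (by omega),
    hR.four_mul k (by omega), hR.four_mul_sub_one hk, show 4 * k + 2 - 4 * k = 2 by ring,
    hR.sub_quadTerm_eq_zero hr4 hk (by omega), show 4 * k + 2 - 3 = 4 * k - 1 by ring,
    hR.two, hR.four_mul_sub_one hk, hR.four_mul_add_two k (by omega)]
  norm_num

theorem nestedRec_four_mul_add_three (hR : IsQuadraticFamily r4 R) (hr4 : 4 ≤ r4) (hk : 2 ≤ k) :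
    nestedRec R (4 * k + 3) = R (4 * k + 3) := by
  rw [nestedRec, show 4 * k + 3 - 1 = 4 * k + 2 by ring, show 4 * k + 3 - 2 = 4 * k + 1 by ring,
    show 4 * k + 3 - 3 = 4 * k by ring, hR.four_mul_add_two k (by omega),
    hR.four_mul_add_one k (by omega), hR.four_mul k (by omega),
    show 4 * k + 3 - 4 = 4 * k - 1 by ring, show 4 * k + 3 - 4 * k = 3 by ring,
    hR.sub_quadTerm_eq_zero hr4 hk le_rfl, hR.four_mul_sub_one hk, hR.three,
    hR.four_mul_add_three k (by omega)]
  norm_num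

end IsQuadraticFamily

theorem quadratic_solution_family_general (r4 : ℤ) (hr4 : 4 ≤ r4) (R : ℤ → ℤ)
    (h0 : ∀ n : ℤ, n ≤ 0 → R n = 0)
    (h2 : R 2 = 1) (h3 : R 3 = 0)
    (h4k : ∀ k : ℤ, 1 ≤ k → R (4 * k) = 2 * k ^ 2 + (r4 - 2) * k)
    (h4k1 : ∀ k : ℤ, 1 ≤ k → R (4 * k + 1) = 4 * k)
    (h4k2 : ∀ k : ℤ, 1 ≤ k → R (4 * k + 2) = 4)
    (h4k3 : ∀ k : ℤ, 1 ≤ k → R (4 * k + 3) = 3) :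
    ∀ n : ℤ, 8 ≤ n →
      R n = R (n - R (n - 1)) + R (n - R (n - 2)) + R (n - R (n - 3)) := by
  intro n hn
  have hR : IsQuadraticFamily r4 R := ⟨h0, h2, h3, h4k, h4k1, h4k2, h4k3⟩
  obtain ⟨k, hk, rfl | rfl | rfl | rfl⟩ :
      ∃ k, 2 ≤ k ∧ (n = 4 * k ∨ n = 4 * k + 1 ∨ n = 4 * k + 2 ∨ n = 4 * k + 3) :=
    ⟨n / 4, by omega, by omega⟩
  · exact (hR.nestedRec_four_mul hk).symm
  · exact (hR.nestedRec_four_mul_add_one hr4 hk).symm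
  · exact (hR.nestedRec_four_mul_add_two hr4 hk).symm
  · exact (hR.nestedRec_four_mul_add_three hr4 hk).symm

/-- A family of solutions to R(n) = R(n−R(n−1)) + R(n−R(n−2)) + R(n−R(n−3))
with initial condition [r1, 1, 0, r4, 4, 4, 3], containing a quadratic
subsequence, two constant subsequences, and a standard linear subsequence. -/
theorem quadratic_solution_family (r1 r4 : ℤ) (hr4 : 4 ≤ r4) (R : ℤ → ℤ)
    (h0 : ∀ n : ℤ, n ≤ 0 → R n = 0)
    (h1 : R 1 = r1) (h2 : R 2 = 1) (h3 : R 3 = 0)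
    (h4k : ∀ k : ℤ, 1 ≤ k → R (4 * k) = 2 * k ^ 2 + (r4 - 2) * k)
    (h4k1 : ∀ k : ℤ, 1 ≤ k → R (4 * k + 1) = 4 * k)
    (h4k2 : ∀ k : ℤ, 1 ≤ k → R (4 * k + 2) = 4)
    (h4k3 : ∀ k : ℤ, 1 ≤ k → R (4 * k + 3) = 3) :
    ∀ n : ℤ, 8 ≤ n →
      R n = R (n - R (n - 1)) + R (n - R (n - 2)) + R (n - R (n - 3)) :=
  quadratic_solution_family_general r4 hr4 R h0 h2 h3 h4k h4k1 h4k2 h4k3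
end

section
/- Define C : ℤ → ℤ by C(n) = 0 for all n ≤ 0, C(1) = 2, and for all k ≥ 1, C(2k) = 2^(2^(k−1)) + 1 and C(2k+1) = 2. Then C satisfies the nonlinear nested recurrence C(n) = C(n − C(n−1))² − 2·C(n − C(n−1)) + 2 for all n ≥ 3. In particular, this nonlinear nested recurrence has a solution containing a doubly exponential subsequence. -/
/-!
The recurrence applies `x ↦ x² - 2x + 2 = (x - 1)² + 1`, which fixes `2`, sends `0` to `2`, and
squares the part above `1`: it sends `2^(2^j) + 1` to `2^(2^(j+1)) + 1`. At an even index `2k`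
the previous term is `2`, so the recurrence looks back to `C(2k - 2)` and squares it; at an odd
index `2k + 1` the previous term `2^(2^(k-1)) + 1` exceeds `2k`, so it looks back into the zeros.
-/

lemma add_one_sq_sub_two_mul_add_two {R : Type*} [CommRing R] (a : R) :
    (a + 1) ^ 2 - 2 * (a + 1) + 2 = a ^ 2 + 1 := by
  ring

lemma two_mul_succ_le_two_pow_two_pow (j : ℕ) : 2 * (j + 1) ≤ 2 ^ 2 ^ j :=
  calc 2 * (j + 1) ≤ 2 * 2 ^ j := Nat.mul_le_mul_left 2 (Nat.lt_two_pow_self (n := j))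
    _ = 2 ^ (j + 1) := by ring
    _ ≤ 2 ^ 2 ^ j := Nat.pow_le_pow_right two_pos (Nat.lt_two_pow_self (n := j))

section

variable {C : ℤ → ℤ}

lemma recurrence_at_even (h2k : ∀ k : ℕ, 1 ≤ k → C (2 * (k : ℤ)) = 2 ^ (2 ^ (k - 1)) + 1)
    (h2k1 : ∀ k : ℤ, 1 ≤ k → C (2 * k + 1) = 2) (j : ℕ) :
    let n : ℤ := 2 * (j + 2)
    C n = (C (n - C (n - 1))) ^ 2 - 2 * C (n - C (n - 1)) + 2 := by
  intro n
  have h_prev : C (n - 1) = 2 := by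
    rw [show n - 1 = 2 * (j + 1) + 1 by ring]
    exact h2k1 _ (by omega)
  have h_back : C (n - 2) = 2 ^ 2 ^ j + 1 := by
    rw [show n - 2 = 2 * ((j + 1 : ℕ) : ℤ) by push_cast; ring]
    exact h2k (j + 1) (by omega)
  have h_n : C n = 2 ^ 2 ^ (j + 1) + 1 := by
    rw [show n = 2 * ((j + 2 : ℕ) : ℤ) by push_cast; ring]
    exact h2k (j + 2) (by omega)
  rw [h_prev, h_back, h_n, add_one_sq_sub_two_mul_add_two, ← pow_mul, ← pow_succ]

lemma recurrence_at_odd (h0 : ∀ n : ℤ, n ≤ 0 → C n = 0)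
    (h2k : ∀ k : ℕ, 1 ≤ k → C (2 * (k : ℤ)) = 2 ^ (2 ^ (k - 1)) + 1)
    (h2k1 : ∀ k : ℤ, 1 ≤ k → C (2 * k + 1) = 2) (j : ℕ) :
    let n : ℤ := 2 * (j + 1) + 1
    C n = (C (n - C (n - 1))) ^ 2 - 2 * C (n - C (n - 1)) + 2 := by
  intro n
  have h_prev : C (n - 1) = 2 ^ 2 ^ j + 1 := by
    rw [show n - 1 = 2 * ((j + 1 : ℕ) : ℤ) by push_cast; ring]
    exact h2k (j + 1) (by omega)
  have h_back : C (n - C (n - 1)) = 0 := by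
    have : (2 * (j + 1) : ℤ) ≤ 2 ^ 2 ^ j := by exact_mod_cast two_mul_succ_le_two_pow_two_pow j
    exact h0 _ (by rw [h_prev]; omega)
  rw [h_back, h2k1 _ (by omega)]
  norm_num

end

theorem doubly_exponential_solution_general (C : ℤ → ℤ)
    (h0 : ∀ n : ℤ, n ≤ 0 → C n = 0)
    (h2k : ∀ k : ℕ, 1 ≤ k → C (2 * (k : ℤ)) = 2 ^ (2 ^ (k - 1)) + 1)
    (h2k1 : ∀ k : ℤ, 1 ≤ k → C (2 * k + 1) = 2) :
    ∀ n : ℤ, 3 ≤ n →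
      C n = (C (n - C (n - 1))) ^ 2 - 2 * C (n - C (n - 1)) + 2 := by
  intro n hn
  obtain ⟨k, rfl | rfl⟩ := Int.even_or_odd' n
  · obtain ⟨j, rfl⟩ : ∃ j : ℕ, k = j + 2 := ⟨(k - 2).toNat, by omega⟩
    exact recurrence_at_even h2k h2k1 j
  · obtain ⟨j, rfl⟩ : ∃ j : ℕ, k = j + 1 := ⟨(k - 1).toNat, by omega⟩
    exact recurrence_at_odd h0 h2k h2k1 j

/-- A doubly exponential solution to the nonlinear nested recurrence
C(n) = C(n − C(n−1))² − 2·C(n − C(n−1)) + 2. -/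
theorem doubly_exponential_solution (C : ℤ → ℤ)
    (h0 : ∀ n : ℤ, n ≤ 0 → C n = 0)
    (h1 : C 1 = 2)
    (h2k : ∀ k : ℕ, 1 ≤ k → C (2 * (k : ℤ)) = 2 ^ (2 ^ (k - 1)) + 1)
    (h2k1 : ∀ k : ℤ, 1 ≤ k → C (2 * k + 1) = 2) :
    ∀ n : ℤ, 3 ≤ n →
      C n = (C (n - C (n - 1))) ^ 2 - 2 * C (n - C (n - 1)) + 2 :=
  doubly_exponential_solution_general C h0 h2k h2k1
end

section
/- There exists a function Q : ℤ → ℤ with Q(n) = 0 for all n ≤ 0, whose values at n = 1, …, 45 are, in order, 0, 4, −40, −9, 8, −8, 7, 1, 5, 13, −24, −1, 8, 8, 8, 1, 5, 13, −8, 7, 8, 8, 23, 1, 5, 13, 8, 15, 8, 16, 31, 1, 5, 13, 24, 23, 8, 24, 39, 1, 5, 13, 40, 31, 8, which satisfies the Hofstadter Q-recurrence Q(n) = Q(n − Q(n−1)) + Q(n − Q(n−2)) for all n ≥ 46, and which satisfies Q(8n+3) = 16n − 40 for all n ≥ 0. In particular, the Q-recurrence admits a period-8 solution with a subsequence of slope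 16, arising from adding two standard linear terms. -/
/-!
Away from the indices 1, 2, 14 and 15 the solution is quasi-linear of period 8: on every
residue class mod 8 it is a constant or an affine function of `n` of slope 1, except on the
class 3 mod 8, where `Q n = Q (n - 13) + Q (n - 5)` adds two terms of the slope-1 class
6 mod 8 and so has slope 2. For `n ≥ 46` every lookback `n - Q (n - 1)`, `n - Q (n - 2)` is
either in the quasi-linear range or one of the indices `≤ 0`, 1, 2, 14, 15, so on each residue
class the recurrence is an identity between affine functions of `n`.
-/

/-- The 45 initial values of the period-8 solution A275361. -/
def initVals45 : Fin 45 → ℤ :=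
  ![0, 4, -40, -9, 8, -8, 7, 1, 5, 13, -24, -1, 8, 8, 8, 1, 5, 13, -8, 7, 8, 8,
    23, 1, 5, 13, 8, 15, 8, 16, 31, 1, 5, 13, 24, 23, 8, 24, 39, 1, 5, 13, 40, 31, 8]

def periodEightPattern (n : ℤ) : ℤ :=
  if n % 8 = 0 then 1
  else if n % 8 = 1 then 5
  else if n % 8 = 2 then 13
  else if n % 8 = 3 then 2 * n - 46
  else if n % 8 = 4 then n - 13
  else if n % 8 = 5 then 8
  else if n % 8 = 6 then n - 14
  else n

def slopeSixteenQ (n : ℤ) : ℤ :=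
  if n ≤ 0 then 0
  else if n = 1 then 0
  else if n = 2 then 4
  else if n = 14 ∨ n = 15 then 8
  else periodEightPattern n

namespace slopeSixteenQ

variable {n : ℤ}

theorem of_nonpos (h : n ≤ 0) : slopeSixteenQ n = 0 := if_pos h

/- The exceptional values are stated for a variable argument, so that `simp` can apply them
to lookbacks such as `n - (n - 1)`, with `omega` discharging the side condition. -/
theorem of_eq_one (h : n = 1) : slopeSixteenQ n = 0 := by subst h; rfl

theorem of_eq_two (h : n = 2) : slopeSixteenQ n = 4 := by subst h; rfl

theorem of_eq_fourteen_or_fifteen (h : n = 14 ∨ n = 15) : slopeSixteenQ n = 8 := by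
  rcases h with rfl | rfl <;> rfl

theorem eq_periodEightPattern (h3 : 3 ≤ n) (h14 : n ≠ 14) (h15 : n ≠ 15) :
    slopeSixteenQ n = periodEightPattern n := by
  rw [slopeSixteenQ, if_neg (by omega), if_neg (by omega), if_neg (by omega), if_neg (by omega)]

theorem initVals (i : Fin 45) : slopeSixteenQ ((i : ℕ) + 1 : ℤ) = initVals45 i := by
  revert i
  decide

theorem recurrence (hn : 46 ≤ n) :
    slopeSixteenQ n =
      slopeSixteenQ (n - slopeSixteenQ (n - 1)) + slopeSixteenQ (n - slopeSixteenQ (n - 2)) := by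
  obtain h | h | h | h | h | h | h | h : n % 8 = 0 ∨ n % 8 = 1 ∨ n % 8 = 2 ∨ n % 8 = 3 ∨
      n % 8 = 4 ∨ n % 8 = 5 ∨ n % 8 = 6 ∨ n % 8 = 7 := by omega
  all_goals
    simp (disch := omega) only [eq_periodEightPattern, of_nonpos, of_eq_one, of_eq_two,
      of_eq_fourteen_or_fifteen, periodEightPattern, if_pos, if_neg]
    omega

theorem eight_mul_add_three (hn : 0 ≤ n) : slopeSixteenQ (8 * n + 3) = 16 * n - 40 := by
  simp (disch := omega) only [eq_periodEightPattern, periodEightPattern, if_pos, if_neg]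
  ring

end slopeSixteenQ

/-- The Hofstadter Q-recurrence admits a period-8 solution with a subsequence
of slope 16, namely Q(8n+3) = 16n − 40, arising from the length-45 initial
condition listed above. -/
theorem period_eight_slope_sixteen :
    ∃ Q : ℤ → ℤ,
      (∀ n : ℤ, n ≤ 0 → Q n = 0) ∧
      (∀ i : Fin 45, Q ((i : ℕ) + 1 : ℤ) = initVals45 i) ∧
      (∀ n : ℤ, 46 ≤ n → Q n = Q (n - Q (n - 1)) + Q (n - Q (n - 2))) ∧
      (∀ n : ℤ, 0 ≤ n → Q (8 * n + 3) = 16 * n - 40) :=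
  ⟨slopeSixteenQ, fun _ => slopeSixteenQ.of_nonpos, slopeSixteenQ.initVals,
    fun _ => slopeSixteenQ.recurrence, fun _ => slopeSixteenQ.eight_mul_add_three⟩
end

section
/- There exists a function Q : ℤ → ℤ with Q(n) = 0 for all n ≤ 0, whose values at n = 1, …, 16 are, in order, −9, 2, 9, 2, 0, 7, 9, 10, 3, 0, 2, 9, 2, 9, 9, 9, which satisfies the Hofstadter Q-recurrence Q(n) = Q(n − Q(n−1)) + Q(n − Q(n−2)) for all n ≥ 17, and for which there exist integers c, c′ and n₀ such that Q(9n+2) = 10n + c and Q(9n+8) = 10n + c′ for all n ≥ n₀. In particular, the Q-recurrence admits a period-9 solution in which the subsequences Q(9n+2) and Q(9n+8) are both linear with slope 10. -/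
/-!
The solution is an explicit closed form: apart from the three defects `Q 6 = 7`, `Q 7 = 9` and
`Q 11 = 2`, the value `Q (9k + r)` is `3, 9k - 9, 10k + 2, 9, 2, 9k, 9, 9k, 10k + 10` for
`r = 0, …, 8`. Once the residue of `n` mod 9 is fixed, so are the residues of `n - 1`, `n - 2` and
of both look-back indices `n - Q (n - 1)`, `n - Q (n - 2)`: each of these is nonpositive, one of the
fixed small indices, or one period behind `n`. The recurrence then becomes an affine identity in
`n / 9`.
-/

/-- The 16 initial values of the period-9 solution A275362. -/
def initVals16 : Fin 16 → ℤ :=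
  ![-9, 2, 9, 2, 0, 7, 9, 10, 3, 0, 2, 9, 2, 9, 9, 9]

def period9Pattern (n : ℤ) : ℤ :=
  if n % 9 = 0 then 3
  else if n % 9 = 1 then 9 * (n / 9) - 9
  else if n % 9 = 2 then 10 * (n / 9) + 2
  else if n % 9 = 4 then 2
  else if n % 9 = 5 ∨ n % 9 = 7 then 9 * (n / 9)
  else if n % 9 = 8 then 10 * (n / 9) + 10
  else 9

def period9Sol (n : ℤ) : ℤ :=
  if n ≤ 0 then 0
  else if n = 6 then 7
  else if n = 7 then 9
  else if n = 11 then 2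
  else period9Pattern n

section Evaluation

variable {n : ℤ}

/- The equations of `period9Sol` take the argument as a variable constrained by hypotheses, so that
`simp` can apply them to any index term and leave the side conditions to `omega`. -/

lemma period9Sol_of_nonpos (h : n ≤ 0) : period9Sol n = 0 := if_pos h

lemma period9Sol_of_eq_six (h : n = 6) : period9Sol n = 7 := by subst h; rfl

lemma period9Sol_of_eq_seven (h : n = 7) : period9Sol n = 9 := by subst h; rfl

lemma period9Sol_of_eq_eleven (h : n = 11) : period9Sol n = 2 := by subst h; rfl

lemma period9Sol_of_pos (h : 0 < n) (h6 : n ≠ 6) (h7 : n ≠ 7) (h11 : n ≠ 11) :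
    period9Sol n = period9Pattern n := by
  simp [period9Sol, not_le.2 h, h6, h7, h11]

end Evaluation

lemma period9Sol_init : ∀ i : Fin 16, period9Sol ((i : ℕ) + 1 : ℤ) = initVals16 i := by
  decide

lemma period9Sol_rec {n : ℤ} (hn : 17 ≤ n) :
    period9Sol n = period9Sol (n - period9Sol (n - 1)) + period9Sol (n - period9Sol (n - 2)) := by
  have hr : n % 9 = 0 ∨ n % 9 = 1 ∨ n % 9 = 2 ∨ n % 9 = 3 ∨ n % 9 = 4 ∨ n % 9 = 5 ∨
      n % 9 = 6 ∨ n % 9 = 7 ∨ n % 9 = 8 := by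
    omega
  rcases hr with h | h | h | h | h | h | h | h | h <;>
  simp (disch := omega) only [period9Sol_of_nonpos, period9Sol_of_eq_six, period9Sol_of_eq_seven,
    period9Sol_of_eq_eleven, period9Sol_of_pos, period9Pattern, if_pos, if_neg] <;>
  omega

lemma period9Sol_nine_mul_add_two {k : ℤ} (hk : 2 ≤ k) : period9Sol (9 * k + 2) = 10 * k + 2 := by
  rw [period9Sol_of_pos (by omega) (by omega) (by omega) (by omega), period9Pattern]
  simp (disch := omega) only [if_pos, if_neg]
  omega

lemma period9Sol_nine_mul_add_eight {k : ℤ} (hk : 0 ≤ k) :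
    period9Sol (9 * k + 8) = 10 * k + 10 := by
  rw [period9Sol_of_pos (by omega) (by omega) (by omega) (by omega), period9Pattern]
  simp (disch := omega) only [if_pos, if_neg]
  omega

/-- The Hofstadter Q-recurrence admits a period-9 solution, given by the
length-16 initial condition listed above, in which the subsequences Q(9n+2)
and Q(9n+8) are both eventually linear with slope 10. -/
theorem period_nine_two_steep_linear :
    ∃ Q : ℤ → ℤ,
      (∀ n : ℤ, n ≤ 0 → Q n = 0) ∧
      (∀ i : Fin 16, Q ((i : ℕ) + 1 : ℤ) = initVals16 i) ∧
      (∀ n : ℤ, 17 ≤ n → Q n = Q (n - Q (n - 1)) + Q (n - Q (n - 2))) ∧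
      (∃ c c' n₀ : ℤ, ∀ n : ℤ, n₀ ≤ n →
        Q (9 * n + 2) = 10 * n + c ∧ Q (9 * n + 8) = 10 * n + c') :=
  ⟨period9Sol, fun _ ↦ period9Sol_of_nonpos, period9Sol_init, fun _ ↦ period9Sol_rec,
    2, 10, 2, fun _ hn ↦ ⟨period9Sol_nine_mul_add_two hn, period9Sol_nine_mul_add_eight (by omega)⟩⟩
end

section
/- There exists a function Q : ℤ → ℤ with Q(n) = 0 for all n ≤ 0, whose values at n = 1, …, 12 are, in order, 9, 0, 0, 0, 7, 9, 9, 10, 4, 9, 9, 3, which satisfies the Hofstadter Q-recurrence Q(n) = Q(n − Q(n−1)) + Q(n − Q(n−2)) for all n ≥ 13, and for which there exist a positive integer m, residues r and r′ with 0 ≤ r, r′ < m, integers A > 0, B, C, reals ρ > 1 and c > 0, and an integer k₀ such that Q(mk + r) = Ak² + Bk + C and Q(mk + r′) ≥ c·ρ^k for all k ≥ k₀. That is, this initial condition yields a solution to the Q-recurrence containing both a quadratic subsequence and an exponentially growing subsequence. -/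
/-- The 12 initial values of the solution A275153. -/
def initVals12 : Fin 12 → ℤ :=
  ![9, 0, 0, 0, 7, 9, 9, 10, 4, 9, 9, 3]

/-!
From n = 5 on, the solution is periodic modulo 9 except on three residues: on n = 5 + 9t it
takes the values 7 + 9(1 + ⋯ + t), on n = 8 + 9t the values 10·2^t, and on n ≡ 2 it equals
n - 2; elsewhere it is 9, 4 or 3. Each of the nine residue classes is checked against the
recurrence directly: the large values only ever send the recurrence to arguments ≤ 0, where Q
vanishes, while the small values 9, 4, 3 look back one period, which adds 9(t + 1) to the
quadratic column and doubles the exponential one. Along n = 18k + 5 and n = 18k + 8 this gives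
18k² + 9k + 7 and 10·4^k.
-/

namespace A275153

def quadTerm : ℕ → ℤ
  | 0 => 7
  | t + 1 => quadTerm t + 9 * (t + 1)

theorem two_mul_quadTerm (t : ℕ) : 2 * quadTerm t = 9 * t * (t + 1) + 14 := by
  induction t with
  | zero => rfl
  | succ t ih => simp only [quadTerm]; push_cast; linarith

theorem quadTerm_two_mul (k : ℕ) : quadTerm (2 * k) = 18 * k ^ 2 + 9 * k + 7 := by
  have := two_mul_quadTerm (2 * k)
  push_cast at this
  linarith

theorem le_quadTerm (t : ℕ) : 9 * (t : ℤ) + 7 ≤ quadTerm t := by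
  induction t with
  | zero => rfl
  | succ t ih => simp only [quadTerm]; push_cast; linarith

theorem le_ten_mul_two_pow (t : ℕ) : 9 * (t : ℤ) + 10 ≤ 10 * 2 ^ t := by
  have : (t : ℤ) < 2 ^ t := by exact_mod_cast Nat.lt_two_pow_self
  omega

def seq (n : ℤ) : ℤ :=
  if n = 1 then 9
  else if n < 5 then 0
  else if n % 9 = 5 then quadTerm ((n - 5) / 9).toNat
  else if n % 9 = 8 then 10 * 2 ^ ((n - 8) / 9).toNat
  else if n % 9 = 0 then 4
  else if n % 9 = 2 then n - 2
  else if n % 9 = 3 then 3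
  else 9

variable {n : ℤ}

theorem seq_eq_zero (h1 : n ≠ 1) (h5 : n < 5) : seq n = 0 := by
  unfold seq; split_ifs <;> omega

theorem seq_eq_quadTerm (t : ℕ) (h : n = 5 + 9 * t) : seq n = quadTerm t := by
  unfold seq; split_ifs <;> first | omega | congr; omega

theorem seq_eq_ten_mul_two_pow (t : ℕ) (h : n = 8 + 9 * t) : seq n = 10 * 2 ^ t := by
  unfold seq; split_ifs <;> first | omega | congr; omega

theorem seq_eq_four (h5 : 5 ≤ n) (h : n % 9 = 0) : seq n = 4 := by
  unfold seq; split_ifs <;> omega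

theorem seq_eq_sub_two (h5 : 5 ≤ n) (h : n % 9 = 2) : seq n = n - 2 := by
  unfold seq; split_ifs <;> omega

theorem seq_eq_three (h5 : 5 ≤ n) (h : n % 9 = 3) : seq n = 3 := by
  unfold seq; split_ifs <;> omega

theorem seq_eq_nine (h5 : 5 ≤ n) (h : n % 9 = 1 ∨ n % 9 = 4 ∨ n % 9 = 6 ∨ n % 9 = 7) :
    seq n = 9 := by
  unfold seq; split_ifs <;> omega

theorem seq_rec (hn : 13 ≤ n) : seq n = seq (n - seq (n - 1)) + seq (n - seq (n - 2)) := by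
  obtain ⟨t, j, hj, hnj⟩ : ∃ t j : ℕ, j < 9 ∧ n = 13 + 9 * t + j :=
    ⟨((n - 13) / 9).toNat, ((n - 13) % 9).toNat, by omega, by omega⟩
  interval_cases j <;>
    simp (disch := omega) only [seq_eq_zero, seq_eq_four, seq_eq_sub_two, seq_eq_three,
      seq_eq_nine] <;> try omega
  -- left: n ≡ 5, 6, 7, 8, 0, 1 (mod 9), where the quadratic or the exponential column enters
  · rw [seq_eq_quadTerm (t + 1) (by omega), seq_eq_quadTerm (n := n - 9) t (by omega), quadTerm]
    omega
  · have := le_quadTerm (t + 1)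
    rw [seq_eq_quadTerm (n := n - 1) (t + 1) (by omega), seq_eq_zero (by omega) (by omega),
      zero_add]
  · have := le_quadTerm (t + 1)
    rw [seq_eq_quadTerm (n := n - 2) (t + 1) (by omega), seq_eq_zero (by omega) (by omega),
      add_zero]
  · rw [seq_eq_ten_mul_two_pow (t + 1) (by omega),
      seq_eq_ten_mul_two_pow (n := n - 9) t (by omega), pow_succ]
    ring
  · have := le_ten_mul_two_pow (t + 1)
    rw [seq_eq_ten_mul_two_pow (n := n - 1) (t + 1) (by omega), seq_eq_zero (by omega) (by omega),
      zero_add]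
  · have := le_ten_mul_two_pow (t + 1)
    rw [seq_eq_ten_mul_two_pow (n := n - 2) (t + 1) (by omega), seq_eq_zero (by omega) (by omega),
      add_zero]

end A275153

/-- The Hofstadter Q-recurrence admits a solution, given by the length-12
initial condition listed above, containing both a quadratic subsequence and an
exponentially growing subsequence. -/
theorem quadratic_and_exponential_solution :
    ∃ Q : ℤ → ℤ,
      (∀ n : ℤ, n ≤ 0 → Q n = 0) ∧
      (∀ i : Fin 12, Q ((i : ℕ) + 1 : ℤ) = initVals12 i) ∧
      (∀ n : ℤ, 13 ≤ n → Q n = Q (n - Q (n - 1)) + Q (n - Q (n - 2))) ∧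
      (∃ m r r' : ℕ, 0 < m ∧ r < m ∧ r' < m ∧
        ∃ A B C : ℤ, 0 < A ∧ ∃ ρ c : ℝ, 1 < ρ ∧ 0 < c ∧ ∃ k₀ : ℕ,
          ∀ k : ℕ, k₀ ≤ k →
            Q ((m : ℤ) * k + r) = A * (k : ℤ) ^ 2 + B * k + C ∧
            c * ρ ^ k ≤ (Q ((m : ℤ) * k + r') : ℝ)) := by
  refine ⟨A275153.seq, fun n hn => A275153.seq_eq_zero (by omega) (by omega),
    fun i => by fin_cases i <;> rfl, fun n => A275153.seq_rec,
    18, 5, 8, by norm_num, by norm_num, by norm_num, 18, 9, 7, by norm_num,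
    4, 10, by norm_num, by norm_num, 0, fun k _ => ⟨?_, ?_⟩⟩
  · rw [A275153.seq_eq_quadTerm (2 * k) (by push_cast; ring), A275153.quadTerm_two_mul]
  · rw [A275153.seq_eq_ten_mul_two_pow (2 * k) (by push_cast; ring), pow_mul]
    norm_num
end

section
/- Let d ≥ 1 and K ≥ d be integers, let α_1, …, α_d be nonnegative integers with α_1 + ⋯ + α_d ≥ 2, and let f : ℕ → ℤ satisfy f(k) ≥ 0 for all k ≥ K. Suppose a : ℕ → ℤ satisfies a(k) = Σ_{ℓ=1}^{d} α_ℓ · a(k − ℓ) + f(k) for all k ≥ K, and a(k) ≥ 1 for all K − d ≤ k ≤ K − 1. Then a grows at least exponentially: there exist a real ρ > 1 and a real c > 0 such that a(k) ≥ c · ρ^k for all k ≥ K. -/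
/-!
Every term from `K` on is at least the sum of the previous `d` terms weighted by the `α ℓ`,
whose total weight is at least `2`; so a lower bound valid on a window of `d` consecutive
terms doubles on the next window. Starting from the bound `1` on the initial window, the
`k`-th term is at least `2 ^ ((k - (K - d)) / d)`, i.e. of order `(2 ^ (1 / d)) ^ k`.
-/

open Finset

theorem pow_div_le_of_window_growth {R : Type*} [Semiring R] [PartialOrder R] [IsOrderedRing R]
    {a : ℕ → R} {r : R} (hr : 1 ≤ r) {n₀ d : ℕ} (hd : 0 < d)
    (hinit : ∀ k, n₀ ≤ k → k < n₀ + d → 1 ≤ a k)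
    (hstep : ∀ k, n₀ + d ≤ k → ∀ m, 0 ≤ m → (∀ ℓ ∈ Icc 1 d, m ≤ a (k - ℓ)) → r * m ≤ a k) :
    ∀ k, n₀ ≤ k → r ^ ((k - n₀) / d) ≤ a k := by
  intro k
  induction k using Nat.strong_induction_on with
  | _ k ih =>
    intro hk
    rcases lt_or_ge k (n₀ + d) with hwindow | hlater
    · rw [Nat.div_eq_of_lt (by omega), pow_zero]
      exact hinit k hk hwindow
    · have hexp : (k - n₀) / d = (k - n₀ - d) / d + 1 := by
        rw [← Nat.add_div_right _ hd, Nat.sub_add_cancel (by omega)]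
      rw [hexp, pow_succ']
      refine hstep k hlater _ (pow_nonneg (zero_le_one.trans hr) _) fun ℓ hℓ => ?_
      rw [mem_Icc] at hℓ
      calc r ^ ((k - n₀ - d) / d) ≤ r ^ ((k - ℓ - n₀) / d) :=
            pow_le_pow_right₀ hr (Nat.div_le_div_right (by omega))
        _ ≤ a (k - ℓ) := ih (k - ℓ) (by omega) (by omega)

theorem pow_le_mul_pow_div_of_pow_eq {R : Type*} [Semiring R] [PartialOrder R] [IsOrderedRing R]
    {ρ r : R} (hρ : 1 ≤ ρ) {d : ℕ} (hd : 0 < d)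
    (hρd : ρ ^ d = r) (n : ℕ) : ρ ^ n ≤ r * r ^ (n / d) :=
  calc ρ ^ n ≤ ρ ^ (d * (n / d + 1)) := pow_le_pow_right₀ hρ (Nat.lt_mul_div_succ n hd).le
    _ = r * r ^ (n / d) := by rw [pow_mul, hρd, pow_succ']

theorem sum_mul_le_sum_mul_of_le {ι R : Type*} [Semiring R] [PartialOrder R] [IsOrderedRing R]
    {s : Finset ι} {w x : ι → R} {m : R} (hw : ∀ i ∈ s, 0 ≤ w i) (h : ∀ i ∈ s, m ≤ x i) :
    (∑ i ∈ s, w i) * m ≤ ∑ i ∈ s, w i * x i := by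
  rw [sum_mul]
  exact sum_le_sum fun i hi => mul_le_mul_of_nonneg_left (h i hi) (hw i hi)

open Finset in
/-- Growth lemma: a sequence governed by a nonnegative linear recurrence whose
coefficients sum to at least 2, with nonnegative nonhomogeneous part and a
positive initial window, grows at least exponentially. -/
theorem exponential_growth_of_heavy_recurrence
    (d K : ℕ) (hd : 1 ≤ d) (hK : d ≤ K) (α : ℕ → ℕ)
    (hsum : 2 ≤ ∑ ℓ ∈ Icc 1 d, α ℓ)
    (f : ℕ → ℤ) (hf : ∀ k : ℕ, K ≤ k → 0 ≤ f k)
    (a : ℕ → ℤ)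
    (hrec : ∀ k : ℕ, K ≤ k → a k = (∑ ℓ ∈ Icc 1 d, (α ℓ : ℤ) * a (k - ℓ)) + f k)
    (hinit : ∀ k : ℕ, K - d ≤ k → k ≤ K - 1 → 1 ≤ a k) :
    ∃ ρ c : ℝ, 1 < ρ ∧ 0 < c ∧ ∀ k : ℕ, K ≤ k → c * ρ ^ k ≤ (a k : ℝ) := by
  have hdoubling : ∀ k, K - d ≤ k → (2 : ℤ) ^ ((k - (K - d)) / d) ≤ a k := by
    refine pow_div_le_of_window_growth one_le_two hd (fun k hk hk' => hinit k hk (by omega))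
      fun k hk m hm hwindow => ?_
    have hweight : (2 : ℤ) ≤ ∑ ℓ ∈ Icc 1 d, (α ℓ : ℤ) := by exact_mod_cast hsum
    calc 2 * m ≤ (∑ ℓ ∈ Icc 1 d, (α ℓ : ℤ)) * m := mul_le_mul_of_nonneg_right hweight hm
      _ ≤ ∑ ℓ ∈ Icc 1 d, (α ℓ : ℤ) * a (k - ℓ) :=
          sum_mul_le_sum_mul_of_le (fun ℓ _ => Int.natCast_nonneg (α ℓ)) hwindow
      _ ≤ a k := by linarith [hrec k (by omega), hf k (by omega)]
  set ρ : ℝ := 2 ^ ((d : ℝ)⁻¹)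
  have hρ : 1 < ρ := Real.one_lt_rpow one_lt_two (by positivity)
  have hρd : ρ ^ d = 2 := Real.rpow_inv_natCast_pow zero_le_two (by omega)
  refine ⟨ρ, (2 * ρ ^ (K - d))⁻¹, hρ, by positivity, fun k hk => ?_⟩
  calc (2 * ρ ^ (K - d))⁻¹ * ρ ^ k = ρ ^ (k - (K - d)) / 2 := by
        rw [← pow_sub_mul_pow ρ (show K - d ≤ k by omega)]
        field_simp
    _ ≤ (2 : ℝ) ^ ((k - (K - d)) / d) := by
        linarith [pow_le_mul_pow_div_of_pow_eq hρ.le (by omega) hρd (k - (K - d))]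
    _ ≤ a k := by exact_mod_cast hdoubling k (by omega)
end

section
/- There is no eventually constant positive solution of the Hofstadter Q-recurrence: there do not exist a function Q : ℤ → ℤ with Q(n) = 0 for all n ≤ 0, integers N and M, and an integer c ≥ 1, such that Q(n) = Q(n − Q(n−1)) + Q(n − Q(n−2)) for all n ≥ N and Q(n) = c for all n ≥ M. -/
/-- A constant tail `c` of a solution forces `c = c + c` far out, since then both shifts
`n - Q (n - 1)` and `n - Q (n - 2)` equal `n - c` and land in the tail again. -/
theorem eq_zero_of_hofstadterQ_eventually_const {Q : ℤ → ℤ} {N M c : ℤ}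
    (hrec : ∀ n : ℤ, N ≤ n → Q n = Q (n - Q (n - 1)) + Q (n - Q (n - 2)))
    (hconst : ∀ n : ℤ, M ≤ n → Q n = c) : c = 0 := by
  have hc : c ≤ |c| := le_abs_self c
  have hc_abs : 0 ≤ |c| := abs_nonneg c
  have hN : N ≤ max N M := le_max_left N M
  have hM : M ≤ max N M := le_max_right N M
  set n := max N M + |c| + 2
  have hrec_n := hrec n (by omega)
  rw [hconst (n - 1) (by omega), hconst (n - 2) (by omega), hconst (n - c) (by omega),
    hconst n (by omega)] at hrec_n
  omega

/-- The Hofstadter Q-recurrence has no eventually constant positive solution. -/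
theorem no_eventually_constant_solution :
    ¬ ∃ (Q : ℤ → ℤ) (N M c : ℤ), 1 ≤ c ∧
      (∀ n : ℤ, n ≤ 0 → Q n = 0) ∧
      (∀ n : ℤ, N ≤ n → Q n = Q (n - Q (n - 1)) + Q (n - Q (n - 2))) ∧
      (∀ n : ℤ, M ≤ n → Q n = c) := by
  rintro ⟨Q, N, M, c, hc, -, hrec, hconst⟩
  have := eq_zero_of_hofstadterQ_eventually_const hrec hconst
  omega
end

section
/- There is no solution of the Hofstadter Q-recurrence that eventually dominates the identity: there do not exist a function Q : ℤ → ℤ with Q(n) = 0 for all n ≤ 0 and integers N and M such that Q(n) = Q(n − Q(n−1)) + Q(n − Q(n−2)) for all n ≥ N and Q(n) ≥ n for all n ≥ M. -/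
/-!
Once `Q (n - 1) ≥ n - 1` and `Q (n - 2) ≥ n - 2`, both arguments `n - Q (n - 1)` and
`n - Q (n - 2)` of the recurrence are at most `2`, where `Q` takes only finitely many nonzero
values. So `Q n` is bounded by a constant for all large `n`, which contradicts `Q n ≥ n`.
-/

lemma exists_forall_le_of_eq_zero_of_nonpos {Q : ℤ → ℤ} (h0 : ∀ n : ℤ, n ≤ 0 → Q n = 0)
    (k : ℤ) : ∃ C, ∀ x ≤ k, Q x ≤ C := by
  obtain ⟨C, hC⟩ := ((Set.finite_Icc 1 k).image Q).bddAbove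
  refine ⟨max 0 C, fun x hx => ?_⟩
  rcases le_or_gt x 0 with hx0 | hx0
  · exact (h0 x hx0).trans_le (le_max_left 0 C)
  · exact le_max_of_le_right (hC ⟨x, ⟨hx0, hx⟩, rfl⟩)

lemma hofstadter_le_two_mul_of_le_pred {Q : ℤ → ℤ} {C n : ℤ} (hC : ∀ x ≤ 2, Q x ≤ C)
    (hrec : Q n = Q (n - Q (n - 1)) + Q (n - Q (n - 2)))
    (h1 : n - 1 ≤ Q (n - 1)) (h2 : n - 2 ≤ Q (n - 2)) : Q n ≤ 2 * C := by
  rw [hrec]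
  linarith [hC (n - Q (n - 1)) (by omega), hC (n - Q (n - 2)) (by omega)]

/-- The Hofstadter Q-recurrence has no solution that eventually dominates the
identity. -/
theorem no_eventually_dominating_solution :
    ¬ ∃ (Q : ℤ → ℤ) (N M : ℤ),
      (∀ n : ℤ, n ≤ 0 → Q n = 0) ∧
      (∀ n : ℤ, N ≤ n → Q n = Q (n - Q (n - 1)) + Q (n - Q (n - 2))) ∧
      (∀ n : ℤ, M ≤ n → n ≤ Q n) := by
  rintro ⟨Q, N, M, h0, hrec, hdom⟩
  obtain ⟨C, hC⟩ := exists_forall_le_of_eq_zero_of_nonpos h0 2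
  set n := max N (max (M + 2) (2 * C + 1))
  have hbound : Q n ≤ 2 * C :=
    hofstadter_le_two_mul_of_le_pred hC (hrec n (by omega)) (hdom _ (by omega))
      (hdom _ (by omega))
  have hdom_n : n ≤ Q n := hdom n (by omega)
  omega
end
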